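/- arXiv:math-ph/0408048 — 3 statements merged into one kernel-verified Lean document; each statement's English description precedes it below -/
import Mathlib

section
/- The map t ↦ ‖α_t(f) − f‖_{L,N}, for f ∈ S(ℝ^d) and fixed L, N ∈ ℕ, is continuous in t and exponentially bounded: there exist C, M > 0 with ‖α_t(f) − f‖_{L,N} ≤ C exp(M|t|) for all t ∈ ℝ. -/
/-- The `x⁰`–`x¹` Lorentz boost matrix on `ℝ^d`. -/
noncomputable def boost (d : ℕ) (t : ℝ) : Matrix (Fin d) (Fin d) ℝ := fun i j =>
  if (i : ℕ) = 0 ∧ (j : ℕ) = 0 then Real.cosh t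
  else if (i : ℕ) = 1 ∧ (j : ℕ) = 1 then Real.cosh t
  else if (i : ℕ) = 0 ∧ (j : ℕ) = 1 then Real.sinh t
  else if (i : ℕ) = 1 ∧ (j : ℕ) = 0 then Real.sinh t
  else if i = j then 1 else 0

/-- The action of the boost matrix on `ℝ^d` (as Euclidean space). -/
noncomputable def boostVec (d : ℕ) (t : ℝ) (x : EuclideanSpace ℝ (Fin d)) :
    EuclideanSpace ℝ (Fin d) :=
  (WithLp.equiv 2 (Fin d → ℝ)).symm ((boost d t).mulVec ((WithLp.equiv 2 (Fin d → ℝ)) x))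

/-- The Schwartz seminorm `‖f‖_{L,N}`. -/
noncomputable def schNorm (d L N : ℕ) (f : EuclideanSpace ℝ (Fin d) → ℂ) : ℝ :=
  ⨆ p : EuclideanSpace ℝ (Fin d) × Fin (L + 1),
    (1 + ‖p.1‖ ^ 2) ^ ((N : ℝ) / 2) * ‖iteratedFDeriv ℝ (p.2 : ℕ) f p.1‖

/-!
The boost is `Λ(t) = D(t) + sinh t • J`, where `D(t)` is diagonal with entries `cosh t` on the
first two coordinates and `1` elsewhere, and `J` exchanges the first two coordinates and kills the
others, so `‖J‖ ≤ 1`. Moreover `Λ(-t) Λ(t) = 1` when `d ≥ 2`, while `Λ(t) = cosh t` when `d ≤ 1`.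
Hence `‖Λ(t)‖ ≤ e^{|t|}` and `‖x‖ ≤ e^{|t|} ‖Λ(t) x‖`, so composing with `Λ(t)` costs at most a
factor `e^{(N+L)|t|}` in the `(L, N)` seminorm: this is the exponential bound.

For continuity, compare `f ∘ A` and `f ∘ B` for two such maps: their `n`-th derivatives differ by
`O(‖A - B‖ (1 + ‖x‖))` (mean value theorem), and both decay like `(1 + ‖x‖)^{-(2N+1)}`. The
geometric mean of the two bounds controls `(1 + ‖x‖)^N` times the difference by `O(‖A - B‖^{1/2})`
uniformly in `x`, and `t ↦ Λ(t)` is continuous.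
-/

open Real Matrix Filter Topology
open scoped ContDiff Matrix.Norms.L2Operator

section Multilinear

variable {𝕜 : Type*} [NontriviallyNormedField 𝕜] {E E' G : Type*}
  [NormedAddCommGroup E] [NormedSpace 𝕜 E] [NormedAddCommGroup E'] [NormedSpace 𝕜 E']
  [NormedAddCommGroup G] [NormedSpace 𝕜 G]

lemma ContinuousMultilinearMap.norm_compContinuousLinearMap_const_sub_le {n : ℕ}
    (T : ContinuousMultilinearMap 𝕜 (fun _ : Fin n => E') G) {A B : E →L[𝕜] E'} {K : ℝ}
    (hA : ‖A‖ ≤ K) (hB : ‖B‖ ≤ K) :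
    ‖T.compContinuousLinearMap (fun _ => A) - T.compContinuousLinearMap (fun _ => B)‖ ≤
      n * K ^ (n - 1) * ‖A - B‖ * ‖T‖ := by
  let Φ := compContinuousLinearMapContinuousMultilinear 𝕜 (fun _ : Fin n => E)
    (fun _ : Fin n => E') G
  have hΦ : ‖Φ‖ ≤ 1 := MultilinearMap.mkContinuous_norm_le _ zero_le_one _
  have hK : 0 ≤ K := (norm_nonneg A).trans hA
  have hmax : max ‖(fun _ : Fin n => A)‖ ‖(fun _ : Fin n => B)‖ ≤ K :=
    max_le (pi_norm_le_iff_of_nonneg hK |>.mpr fun _ => hA)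
      (pi_norm_le_iff_of_nonneg hK |>.mpr fun _ => hB)
  have hsub : ‖(fun _ : Fin n => A) - fun _ => B‖ ≤ ‖A - B‖ :=
    pi_norm_le_iff_of_nonneg (norm_nonneg _) |>.mpr fun _ => le_rfl
  calc _ = ‖(Φ (fun _ => A) - Φ (fun _ => B)) T‖ := rfl
    _ ≤ ‖Φ (fun _ => A) - Φ (fun _ => B)‖ * ‖T‖ := ContinuousLinearMap.le_opNorm _ _
    _ ≤ 1 * n * K ^ (n - 1) * ‖A - B‖ * ‖T‖ := by
      gcongr
      refine (Φ.norm_image_sub_le _ _).trans ?_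
      rw [Fintype.card_fin]
      gcongr
    _ = _ := by ring

end Multilinear

section Composition

variable {E E' F : Type*} [NormedAddCommGroup E] [NormedSpace ℝ E] [NormedAddCommGroup E']
  [NormedSpace ℝ E'] [NormedAddCommGroup F] [NormedSpace ℝ F]

lemma norm_iteratedFDeriv_sub_le {f : E → F} {n : ℕ} (hf : ContDiff ℝ (n + 1) f) {Q : ℝ}
    (hQ : ∀ y, ‖iteratedFDeriv ℝ (n + 1) f y‖ ≤ Q) (y z : E) :
    ‖iteratedFDeriv ℝ n f y - iteratedFDeriv ℝ n f z‖ ≤ Q * ‖y - z‖ :=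
  convex_univ.norm_image_sub_le_of_norm_fderiv_le
    (fun _ _ => (hf.differentiable_iteratedFDeriv (mod_cast lt_add_one n)).differentiableAt)
    (fun w _ => norm_fderiv_iteratedFDeriv.trans_le (hQ w)) (Set.mem_univ z) (Set.mem_univ y)

lemma iteratedFDeriv_comp_sub_comp_apply {f : E' → F} {n : ℕ} (hf : ContDiff ℝ n f)
    (A B : E →L[ℝ] E') (x : E) :
    iteratedFDeriv ℝ n (fun x => f (A x) - f (B x)) x =
      iteratedFDeriv ℝ n (f ∘ A) x - iteratedFDeriv ℝ n (f ∘ B) x :=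
  iteratedFDeriv_sub_apply (hf.comp A.contDiff).contDiffAt (hf.comp B.contDiff).contDiffAt

lemma one_add_norm_pow_mul_norm_iteratedFDeriv_comp_le {f : E' → F} {n : ℕ}
    (hf : ContDiff ℝ n f) {A : E →L[ℝ] E'} {K : ℝ} (hK : 1 ≤ K) (hA : ‖A‖ ≤ K)
    (hA' : ∀ x, ‖x‖ ≤ K * ‖A x‖) (k : ℕ) (x : E) :
    (1 + ‖x‖) ^ k * ‖iteratedFDeriv ℝ n (f ∘ A) x‖ ≤
      K ^ (k + n) * ((1 + ‖A x‖) ^ k * ‖iteratedFDeriv ℝ n f (A x)‖) := by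
  have hweight : 1 + ‖x‖ ≤ K * (1 + ‖A x‖) := by linarith [hA' x]
  have hderiv : ‖iteratedFDeriv ℝ n (f ∘ A) x‖ ≤ ‖iteratedFDeriv ℝ n f (A x)‖ * K ^ n := by
    rw [A.iteratedFDeriv_comp_right hf x le_rfl]
    refine (ContinuousMultilinearMap.norm_compContinuousLinearMap_le _ _).trans ?_
    rw [Finset.prod_const, Finset.card_univ, Fintype.card_fin]
    gcongr
  calc _ ≤ (K * (1 + ‖A x‖)) ^ k * (‖iteratedFDeriv ℝ n f (A x)‖ * K ^ n) := by gcongr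
    _ = _ := by rw [mul_pow, pow_add]; ring

lemma one_add_norm_pow_mul_norm_iteratedFDeriv_comp_sub_comp_le {f : E' → F} {n k : ℕ}
    (hf : ContDiff ℝ n f) {Q : ℝ}
    (hQ : ∀ y, (1 + ‖y‖) ^ k * ‖iteratedFDeriv ℝ n f y‖ ≤ Q) {A B : E →L[ℝ] E'} {K : ℝ}
    (hK : 1 ≤ K) (hA : ‖A‖ ≤ K) (hB : ‖B‖ ≤ K) (hA' : ∀ x, ‖x‖ ≤ K * ‖A x‖)
    (hB' : ∀ x, ‖x‖ ≤ K * ‖B x‖) (x : E) :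
    (1 + ‖x‖) ^ k * ‖iteratedFDeriv ℝ n (f ∘ A) x - iteratedFDeriv ℝ n (f ∘ B) x‖ ≤
      2 * K ^ (k + n) * Q := by
  have hdecay : ∀ C : E →L[ℝ] E', ‖C‖ ≤ K → (∀ x, ‖x‖ ≤ K * ‖C x‖) →
      (1 + ‖x‖) ^ k * ‖iteratedFDeriv ℝ n (f ∘ C) x‖ ≤ K ^ (k + n) * Q := fun C hC hC' =>
    (one_add_norm_pow_mul_norm_iteratedFDeriv_comp_le hf hK hC hC' k x).trans
      (by gcongr; exact hQ _)
  calc _ ≤ (1 + ‖x‖) ^ k * ‖iteratedFDeriv ℝ n (f ∘ A) x‖ +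
        (1 + ‖x‖) ^ k * ‖iteratedFDeriv ℝ n (f ∘ B) x‖ := by
        rw [← mul_add]; gcongr; exact norm_sub_le _ _
    _ ≤ _ := by linarith [hdecay A hA hA', hdecay B hB hB']

lemma norm_iteratedFDeriv_comp_sub_comp_le {f : E' → F} {n : ℕ} (hf : ContDiff ℝ (n + 1) f)
    {Q K : ℝ} (hQ₀ : ∀ y, ‖iteratedFDeriv ℝ n f y‖ ≤ Q)
    (hQ₁ : ∀ y, ‖iteratedFDeriv ℝ (n + 1) f y‖ ≤ Q) (hK : 1 ≤ K) {A B : E →L[ℝ] E'}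
    (hA : ‖A‖ ≤ K) (hB : ‖B‖ ≤ K) (x : E) :
    ‖iteratedFDeriv ℝ n (f ∘ A) x - iteratedFDeriv ℝ n (f ∘ B) x‖ ≤
      (n + 1) * K ^ n * Q * ‖A - B‖ * (1 + ‖x‖) := by
  have hf' : ContDiff ℝ n f := hf.of_le (mod_cast n.le_succ)
  have hQ : 0 ≤ Q := (norm_nonneg _).trans (hQ₀ 0)
  rw [A.iteratedFDeriv_comp_right hf' x le_rfl, B.iteratedFDeriv_comp_right hf' x le_rfl]
  set S := iteratedFDeriv ℝ n f (A x)
  set T := iteratedFDeriv ℝ n f (B x)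
  have hpoint : ‖S - T‖ ≤ Q * (‖A - B‖ * ‖x‖) :=
    (norm_iteratedFDeriv_sub_le hf hQ₁ _ _).trans (by gcongr; exact (A - B).le_opNorm x)
  have hfirst : ‖(S - T).compContinuousLinearMap fun _ => A‖ ≤ Q * (‖A - B‖ * ‖x‖) * K ^ n := by
    refine (ContinuousMultilinearMap.norm_compContinuousLinearMap_le _ _).trans ?_
    rw [Finset.prod_const, Finset.card_univ, Fintype.card_fin]
    gcongr
  have hsecond := T.norm_compContinuousLinearMap_const_sub_le hA hB
  have hKn : K ^ (n - 1) ≤ K ^ n := pow_le_pow_right₀ hK (Nat.sub_le n 1)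
  calc _ = ‖(S - T).compContinuousLinearMap (fun _ => A) +
        (T.compContinuousLinearMap (fun _ => A) - T.compContinuousLinearMap fun _ => B)‖ := by
        congr 1
        ext v
        simp
    _ ≤ Q * (‖A - B‖ * ‖x‖) * K ^ n + n * K ^ (n - 1) * ‖A - B‖ * ‖T‖ :=
        (norm_add_le _ _).trans (add_le_add hfirst hsecond)
    _ ≤ Q * (‖A - B‖ * ‖x‖) * K ^ n + n * K ^ n * ‖A - B‖ * Q := by gcongr; exact hQ₀ _
    _ ≤ _ := by
        have : 0 ≤ Q * ‖A - B‖ * K ^ n := by positivity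
        nlinarith [mul_nonneg this (norm_nonneg x), mul_nonneg this (Nat.cast_nonneg (α := ℝ) n)]

end Composition

lemma exp_abs_eq_cosh_add_abs_sinh (t : ℝ) : exp |t| = cosh t + |sinh t| := by
  rw [abs_sinh, ← cosh_abs t, cosh_add_sinh]

lemma pow_mul_le_sqrt_mul {P h a b : ℝ} (N : ℕ) (hP : 0 < P) (hh : 0 ≤ h) (ha : h ≤ a * P)
    (hb : P ^ (2 * N + 1) * h ≤ b) : P ^ N * h ≤ √(a * b) := by
  refine Real.le_sqrt_of_sq_le (le_of_mul_le_mul_right ?_ hP)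
  calc (P ^ N * h) ^ 2 * P = (P ^ (2 * N + 1) * h) * h := by ring
    _ ≤ b * (a * P) := mul_le_mul hb ha hh ((by positivity : (0 : ℝ) ≤ _).trans hb)
    _ = a * b * P := by ring

lemma one_add_sq_rpow_le_one_add_pow {r : ℝ} (hr : 0 ≤ r) (N : ℕ) :
    (1 + r ^ 2) ^ ((N : ℝ) / 2) ≤ (1 + r) ^ N := by
  calc (1 + r ^ 2) ^ ((N : ℝ) / 2) ≤ ((1 + r) ^ 2) ^ ((N : ℝ) / 2) := by gcongr; nlinarith
    _ = (1 + r) ^ N := by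
      rw [← Real.rpow_natCast (1 + r) 2, ← Real.rpow_mul (by positivity), ← Real.rpow_natCast]
      congr 1
      push_cast
      ring

section SchNorm

variable {d L N : ℕ}

lemma schNorm_le_of_forall {g : EuclideanSpace ℝ (Fin d) → ℂ} {C : ℝ}
    (hC : ∀ x, ∀ n ≤ L, (1 + ‖x‖) ^ N * ‖iteratedFDeriv ℝ n g x‖ ≤ C) : schNorm d L N g ≤ C :=
  ciSup_le fun p => (mul_le_mul_of_nonneg_right (one_add_sq_rpow_le_one_add_pow
    (norm_nonneg p.1) N) (norm_nonneg _)).trans (hC p.1 p.2 (Nat.lt_succ_iff.mp p.2.isLt))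

lemma bddAbove_schNorm (g : SchwartzMap (EuclideanSpace ℝ (Fin d)) ℂ) :
    BddAbove (Set.range fun p : EuclideanSpace ℝ (Fin d) × Fin (L + 1) =>
      (1 + ‖p.1‖ ^ 2) ^ ((N : ℝ) / 2) * ‖iteratedFDeriv ℝ (p.2 : ℕ) g p.1‖) := by
  refine ⟨2 ^ N * (Finset.Iic (N, L)).sup (fun m => SchwartzMap.seminorm ℝ m.1 m.2) g, ?_⟩
  rintro _ ⟨⟨x, n⟩, rfl⟩
  exact (mul_le_mul_of_nonneg_right (one_add_sq_rpow_le_one_add_pow (norm_nonneg x) N)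
    (norm_nonneg _)).trans (SchwartzMap.one_add_le_sup_seminorm_apply (𝕜 := ℝ) (m := (N, L))
      le_rfl (Nat.lt_succ_iff.mp n.isLt) g x)

lemma schNorm_add_le (g h : SchwartzMap (EuclideanSpace ℝ (Fin d)) ℂ) :
    schNorm d L N ⇑(g + h) ≤ schNorm d L N g + schNorm d L N h := by
  refine ciSup_le fun ⟨x, n⟩ => ?_
  have hadd : iteratedFDeriv ℝ n ⇑(g + h) x = iteratedFDeriv ℝ n g x + iteratedFDeriv ℝ n h x :=
    iteratedFDeriv_add_apply (g.smooth n).contDiffAt (h.smooth n).contDiffAt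
  calc _ ≤ (1 + ‖x‖ ^ 2) ^ ((N : ℝ) / 2) * ‖iteratedFDeriv ℝ n g x‖ +
        (1 + ‖x‖ ^ 2) ^ ((N : ℝ) / 2) * ‖iteratedFDeriv ℝ n h x‖ := by
        rw [hadd, ← mul_add]
        gcongr
        exact norm_add_le _ _
    _ ≤ _ :=
      add_le_add (le_ciSup (bddAbove_schNorm g) (x, n)) (le_ciSup (bddAbove_schNorm h) (x, n))

lemma schNorm_comp_sub_comp_le {f : EuclideanSpace ℝ (Fin d) → ℂ} (hf : ContDiff ℝ ∞ f)
    {A B : EuclideanSpace ℝ (Fin d) →L[ℝ] EuclideanSpace ℝ (Fin d)} {K : ℝ} (hK : 1 ≤ K)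
    (hA : ‖A‖ ≤ K) (hB : ‖B‖ ≤ K) (hA' : ∀ x, ‖x‖ ≤ K * ‖A x‖) (hB' : ∀ x, ‖x‖ ≤ K * ‖B x‖)
    {Q : ℝ} (hQ : ∀ n ≤ L, ∀ y, (1 + ‖y‖) ^ N * ‖iteratedFDeriv ℝ n f y‖ ≤ Q) :
    schNorm d L N (fun x => f (A x) - f (B x)) ≤ 2 * K ^ (N + L) * Q := by
  refine schNorm_le_of_forall fun x n hn => ?_
  have hQ0 : 0 ≤ Q := (by positivity : (0 : ℝ) ≤ _).trans (hQ 0 (Nat.zero_le L) 0)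
  rw [iteratedFDeriv_comp_sub_comp_apply (hf.of_le (mod_cast le_top))]
  refine (one_add_norm_pow_mul_norm_iteratedFDeriv_comp_sub_comp_le
    (hf.of_le (mod_cast le_top)) (hQ n hn) hK hA hB hA' hB' x).trans ?_
  gcongr

lemma schNorm_comp_sub_comp_le_sqrt {f : EuclideanSpace ℝ (Fin d) → ℂ} (hf : ContDiff ℝ ∞ f)
    {A B : EuclideanSpace ℝ (Fin d) →L[ℝ] EuclideanSpace ℝ (Fin d)} {K : ℝ} (hK : 1 ≤ K)
    (hA : ‖A‖ ≤ K) (hB : ‖B‖ ≤ K) (hA' : ∀ x, ‖x‖ ≤ K * ‖A x‖) (hB' : ∀ x, ‖x‖ ≤ K * ‖B x‖)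
    {Q : ℝ}
    (hQ : ∀ k ≤ 2 * N + 1, ∀ n ≤ L + 1, ∀ y, (1 + ‖y‖) ^ k * ‖iteratedFDeriv ℝ n f y‖ ≤ Q) :
    schNorm d L N (fun x => f (A x) - f (B x)) ≤
      √((L + 1) * K ^ L * Q * (2 * K ^ (2 * N + 1 + L) * Q) * ‖A - B‖) := by
  refine schNorm_le_of_forall fun x n hn => ?_
  have hQ0 : 0 ≤ Q := (by positivity : (0 : ℝ) ≤ _).trans (hQ 0 (Nat.zero_le _) 0 (Nat.zero_le _) 0)
  have hsmooth : ∀ m : ℕ, ContDiff ℝ m f := fun m => hf.of_le (mod_cast le_top)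
  rw [iteratedFDeriv_comp_sub_comp_apply (hsmooth n), mul_right_comm _ _ ‖A - B‖]
  apply pow_mul_le_sqrt_mul N (by positivity) (norm_nonneg _)
  · refine (norm_iteratedFDeriv_comp_sub_comp_le (hsmooth (n + 1))
      (fun y => by simpa using hQ 0 (Nat.zero_le _) n (by omega) y)
      (fun y => by simpa using hQ 0 (Nat.zero_le _) (n + 1) (by omega) y) hK hA hB x).trans ?_
    gcongr
  · refine (one_add_norm_pow_mul_norm_iteratedFDeriv_comp_sub_comp_le (hsmooth n)
      (hQ _ le_rfl n (by omega)) hK hA hB hA' hB' x).trans ?_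
    gcongr

end SchNorm

section Boost

variable {d : ℕ}

/-- The generator of the boosts: `boost d t = exp (t • boostGenerator d)` when `2 ≤ d`. -/
def boostGenerator (d : ℕ) : Matrix (Fin d) (Fin d) ℝ :=
  of fun i j => if (i : ℕ) + j = 1 then 1 else 0

lemma boost_eq_diagonal_add (t : ℝ) :
    boost d t = diagonal (fun i : Fin d => if (i : ℕ) < 2 then cosh t else 1) +
      sinh t • boostGenerator d := by
  ext i j
  simp only [boost, boostGenerator, Matrix.add_apply, diagonal_apply, Matrix.smul_apply, of_apply,
    smul_eq_mul, Fin.ext_iff]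
  split_ifs <;> first | omega | simp_all

lemma boostGenerator_mul_self :
    boostGenerator d * boostGenerator d =
      diagonal (fun i : Fin d => if (i : ℕ) < 2 ∧ 2 ≤ d then 1 else 0) := by
  ext i j
  rw [mul_apply, diagonal_apply]
  by_cases hi : (i : ℕ) < 2 ∧ 2 ≤ d
  · rw [Finset.sum_eq_single ⟨1 - i, by omega⟩]
    · simp only [boostGenerator, of_apply, Fin.ext_iff]
      split_ifs <;> simp_all
      omega
    · intro k _ hk
      have hk' : (k : ℕ) ≠ 1 - i := fun h => hk (Fin.ext h)
      simp only [boostGenerator, of_apply]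
      split_ifs <;> simp_all
      omega
    · simp
  · have hzero : ∀ k, boostGenerator d i k * boostGenerator d k j = 0 := fun k => by
      simp only [boostGenerator, of_apply]
      split_ifs <;> simp_all
      omega
    simp only [hzero, Finset.sum_const_zero, if_neg hi, ite_self]

lemma commute_diagonal_boostGenerator (a b : ℝ) :
    Commute (diagonal (fun i : Fin d => if (i : ℕ) < 2 then a else b)) (boostGenerator d) := by
  ext i j
  rw [diagonal_mul, mul_diagonal]
  simp only [boostGenerator, of_apply]
  split_ifs <;> first | omega | simp_all

lemma norm_boostGenerator_le : ‖boostGenerator d‖ ≤ 1 := by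
  have hT : (boostGenerator d)ᴴ = boostGenerator d := by
    ext i j; simp [boostGenerator, add_comm]
  have h := l2_opNorm_conjTranspose_mul_self (boostGenerator d)
  rw [hT, boostGenerator_mul_self, l2_opNorm_diagonal] at h
  have h1 : ‖(fun i : Fin d => if (i : ℕ) < 2 ∧ 2 ≤ d then (1 : ℝ) else 0)‖ ≤ 1 :=
    pi_norm_le_iff_of_nonneg zero_le_one |>.mpr fun i => by split_ifs <;> simp
  nlinarith [norm_nonneg (boostGenerator d)]

lemma norm_boost_le (t : ℝ) : ‖boost d t‖ ≤ exp |t| := by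
  have hdiag : ‖diagonal (fun i : Fin d => if (i : ℕ) < 2 then cosh t else 1)‖ ≤ cosh t := by
    rw [l2_opNorm_diagonal]
    refine pi_norm_le_iff_of_nonneg (zero_le_one.trans (one_le_cosh t)) |>.mpr fun i => ?_
    split_ifs
    · rw [Real.norm_of_nonneg (zero_le_one.trans (one_le_cosh t))]
    · simp [one_le_cosh t]
  rw [boost_eq_diagonal_add, exp_abs_eq_cosh_add_abs_sinh]
  calc _ ≤ _ := norm_add_le _ _
    _ ≤ cosh t + |sinh t| * 1 := by
      rw [norm_smul, Real.norm_eq_abs]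
      gcongr
      exact norm_boostGenerator_le
    _ = _ := by ring

lemma boost_neg_mul_boost (hd : 2 ≤ d) (t : ℝ) : boost d (-t) * boost d t = 1 := by
  have hc := (commute_diagonal_boostGenerator (d := d) (cosh t) 1).eq
  rw [boost_eq_diagonal_add, boost_eq_diagonal_add, cosh_neg, sinh_neg]
  calc _ = diagonal (fun i : Fin d => if (i : ℕ) < 2 then cosh t else 1) *
        diagonal (fun i : Fin d => if (i : ℕ) < 2 then cosh t else 1) -
        sinh t ^ 2 • (boostGenerator d * boostGenerator d) := by
        simp only [add_mul, mul_add, smul_mul_assoc, mul_smul_comm, hc]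
        module
    _ = 1 := by
      ext i j
      rw [boostGenerator_mul_self, diagonal_mul_diagonal, Matrix.sub_apply, Matrix.smul_apply,
        diagonal_apply, diagonal_apply, one_apply, smul_eq_mul]
      split_ifs <;> first | omega | nlinarith [cosh_sq t]

lemma boost_of_lt_two (hd : d < 2) (t : ℝ) : boost d t = cosh t • 1 := by
  ext i j
  have hj : (j : ℕ) = 0 := by omega
  have hij : i = j := Fin.ext (by omega)
  simp [boost, hj, hij]

lemma continuous_boost : Continuous (boost d) :=
  continuous_pi fun i => continuous_pi fun j => by
    unfold boost; split_ifs <;> fun_prop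

noncomputable def boostCLM (d : ℕ) (t : ℝ) :
    EuclideanSpace ℝ (Fin d) →L[ℝ] EuclideanSpace ℝ (Fin d) :=
  toEuclideanCLM (n := Fin d) (𝕜 := ℝ) (boost d t)

lemma norm_boostCLM_le (t : ℝ) : ‖boostCLM d t‖ ≤ exp |t| :=
  norm_boost_le t

lemma norm_le_exp_abs_mul_norm_boostCLM (t : ℝ) (x : EuclideanSpace ℝ (Fin d)) :
    ‖x‖ ≤ exp |t| * ‖boostCLM d t x‖ := by
  rcases lt_or_ge d 2 with hd | hd
  · have hx : boostCLM d t x = cosh t • x := by simp [boostCLM, boost_of_lt_two hd]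
    rw [hx, norm_smul, Real.norm_of_nonneg (cosh_pos t).le, ← mul_assoc]
    exact le_mul_of_one_le_left (norm_nonneg x)
      (one_le_mul_of_one_le_of_one_le (one_le_exp (abs_nonneg t)) (one_le_cosh t))
  · calc ‖x‖ = ‖boostCLM d (-t) (boostCLM d t x)‖ := by
          rw [boostCLM, boostCLM, ← mul_apply_eq_comp, ← map_mul,
            boost_neg_mul_boost hd, map_one, one_apply_eq_self]
      _ ≤ ‖boostCLM d (-t)‖ * ‖boostCLM d t x‖ := ContinuousLinearMap.le_opNorm _ _
      _ ≤ exp |t| * ‖boostCLM d t x‖ := by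
          gcongr
          simpa using norm_boostCLM_le (d := d) (-t)

@[fun_prop]
lemma continuous_boostCLM : Continuous (boostCLM d) := by
  refine continuous_iff_continuousAt.2 fun s => tendsto_iff_norm_sub_tendsto_zero.2 ?_
  have h := ((continuous_boost (d := d)).sub (continuous_const (y := boost d s))).norm.tendsto s
  simpa [boostCLM, ← map_sub, l2_opNorm_toEuclideanCLM] using h

end Boost

section Pullback

variable {d : ℕ}

/-- The action `α_t f = f ∘ Λ(-t)` of the boosts on Schwartz space. -/
noncomputable def boostPullback (d : ℕ) (t : ℝ) :
    SchwartzMap (EuclideanSpace ℝ (Fin d)) ℂ →L[ℝ] SchwartzMap (EuclideanSpace ℝ (Fin d)) ℂ :=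
  SchwartzMap.compCLM ℝ (boostCLM d (-t)).hasTemperateGrowth ⟨1, exp |t|, fun x => by
    have hx := norm_le_exp_abs_mul_norm_boostCLM (-t) x
    rw [abs_neg] at hx
    exact hx.trans (by rw [pow_one]; gcongr; linarith)⟩

lemma coe_boostPullback_sub (τ σ : ℝ) (f : SchwartzMap (EuclideanSpace ℝ (Fin d)) ℂ) :
    ⇑(boostPullback d τ f - boostPullback d σ f) =
      fun x => f (boostCLM d (-τ) x) - f (boostCLM d (-σ) x) :=
  rfl

lemma schNorm_boostPullback_sub_le_sqrt_add {L N : ℕ}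
    (f : SchwartzMap (EuclideanSpace ℝ (Fin d)) ℂ) {Q : ℝ}
    (hQ : ∀ k ≤ 2 * N + 1, ∀ n ≤ L + 1, ∀ y, (1 + ‖y‖) ^ k * ‖iteratedFDeriv ℝ n f y‖ ≤ Q)
    {T τ σ : ℝ} (hτ : |τ| ≤ T) (hσ : |σ| ≤ T) :
    schNorm d L N ⇑(boostPullback d τ f - f) ≤
      √((L + 1) * exp T ^ L * Q * (2 * exp T ^ (2 * N + 1 + L) * Q) *
        ‖boostCLM d (-τ) - boostCLM d (-σ)‖) + schNorm d L N ⇑(boostPullback d σ f - f) := by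
  have hK : 1 ≤ exp T := one_le_exp ((abs_nonneg τ).trans hτ)
  have hnorm : ∀ s, |s| ≤ T → ‖boostCLM d (-s)‖ ≤ exp T := fun s hs =>
    (norm_boostCLM_le (-s)).trans (by rw [abs_neg]; exact exp_le_exp.2 hs)
  have hinv : ∀ s, |s| ≤ T → ∀ x, ‖x‖ ≤ exp T * ‖boostCLM d (-s) x‖ := fun s hs x =>
    (norm_le_exp_abs_mul_norm_boostCLM (-s) x).trans (by rw [abs_neg]; gcongr)
  have hdiff := schNorm_comp_sub_comp_le_sqrt (L := L) (N := N) (f.smooth ⊤) hK (hnorm τ hτ)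
    (hnorm σ hσ) (hinv τ hτ) (hinv σ hσ) hQ
  rw [← coe_boostPullback_sub] at hdiff
  rw [← sub_add_sub_cancel (boostPullback d τ f) (boostPullback d σ f) f]
  exact (schNorm_add_le _ _).trans (add_le_add hdiff le_rfl)

lemma continuous_schNorm_boostPullback_sub (L N : ℕ)
    (f : SchwartzMap (EuclideanSpace ℝ (Fin d)) ℂ) :
    Continuous fun t => schNorm d L N ⇑(boostPullback d t f - f) := by
  obtain ⟨Q, hQ⟩ : ∃ Q : ℝ, ∀ k ≤ 2 * N + 1, ∀ n ≤ L + 1, ∀ y,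
      (1 + ‖y‖) ^ k * ‖iteratedFDeriv ℝ n f y‖ ≤ Q :=
    ⟨_, fun k hk n hn => SchwartzMap.one_add_le_sup_seminorm_apply (𝕜 := ℝ)
      (m := (2 * N + 1, L + 1)) hk hn f⟩
  refine continuous_iff_continuousAt.2 fun σ => tendsto_iff_norm_sub_tendsto_zero.2 ?_
  set C := (L + 1) * exp (|σ| + 1) ^ L * Q * (2 * exp (|σ| + 1) ^ (2 * N + 1 + L) * Q)
  have hclose : ∀ τ, |τ - σ| ≤ 1 →
      ‖schNorm d L N ⇑(boostPullback d τ f - f) - schNorm d L N ⇑(boostPullback d σ f - f)‖ ≤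
        √(C * ‖boostCLM d (-τ) - boostCLM d (-σ)‖) := by
    intro τ hτ
    have hτT : |τ| ≤ |σ| + 1 := by
      calc |τ| = |σ + (τ - σ)| := by ring_nf
        _ ≤ |σ| + 1 := (abs_add_le _ _).trans (by linarith)
    have hσT : |σ| ≤ |σ| + 1 := by linarith
    have h₁ := schNorm_boostPullback_sub_le_sqrt_add f hQ hτT hσT
    have h₂ := schNorm_boostPullback_sub_le_sqrt_add f hQ hσT hτT
    rw [norm_sub_rev (boostCLM d (-σ))] at h₂
    rw [Real.norm_eq_abs, abs_sub_le_iff]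
    constructor <;> linarith
  have hlim : Tendsto (fun τ => √(C * ‖boostCLM d (-τ) - boostCLM d (-σ)‖)) (𝓝 σ) (𝓝 0) := by
    have hcont : Continuous fun τ => √(C * ‖boostCLM d (-τ) - boostCLM d (-σ)‖) := by
      fun_prop
    simpa using hcont.tendsto σ
  refine squeeze_zero' (Eventually.of_forall fun _ => norm_nonneg _) ?_ hlim
  filter_upwards [Metric.closedBall_mem_nhds σ one_pos] with τ hτ
  exact hclose τ (by rwa [Metric.mem_closedBall, Real.dist_eq] at hτ)

lemma schNorm_boostPullback_sub_le {L N : ℕ} (f : SchwartzMap (EuclideanSpace ℝ (Fin d)) ℂ)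
    {Q : ℝ} (hQ : ∀ n ≤ L, ∀ y, (1 + ‖y‖) ^ N * ‖iteratedFDeriv ℝ n f y‖ ≤ Q) (t : ℝ) :
    schNorm d L N ⇑(boostPullback d t f - f) ≤ 2 * exp |t| ^ (N + L) * Q := by
  have hA := norm_boostCLM_le (d := d) (-t)
  have hA' := norm_le_exp_abs_mul_norm_boostCLM (d := d) (-t)
  rw [abs_neg] at hA hA'
  have hK : 1 ≤ exp |t| := one_le_exp (abs_nonneg t)
  exact schNorm_comp_sub_comp_le (f.smooth ⊤) hK hA
    ((ContinuousLinearMap.norm_id_le).trans hK) hA'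
    (fun x => le_mul_of_one_le_left (norm_nonneg x) hK) hQ

end Pullback

/-- The map `t ↦ ‖α_t(f) − f‖_{L,N}` is continuous and exponentially bounded. -/
theorem schNorm_boost_diff_continuous_expBounded (d : ℕ)
    (f : SchwartzMap (EuclideanSpace ℝ (Fin d)) ℂ) (L N : ℕ) :
    Continuous (fun t : ℝ => schNorm d L N (fun x => f (boostVec d (-t) x) - f x)) ∧
      ∃ C M : ℝ, 0 < C ∧ 0 < M ∧ ∀ t : ℝ,
        schNorm d L N (fun x => f (boostVec d (-t) x) - f x) ≤ C * Real.exp (M * |t|) := by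
  have hα : ∀ t, ⇑(boostPullback d t f - f) = fun x => f (boostVec d (-t) x) - f x :=
    fun _ => rfl
  simp only [← hα]
  obtain ⟨Q, hQ⟩ : ∃ Q : ℝ, ∀ n ≤ L, ∀ y, (1 + ‖y‖) ^ N * ‖iteratedFDeriv ℝ n f y‖ ≤ Q :=
    ⟨_, fun n hn => SchwartzMap.one_add_le_sup_seminorm_apply (𝕜 := ℝ) (m := (N, L)) le_rfl hn f⟩
  have hQ0 : 0 ≤ Q := (by positivity : (0 : ℝ) ≤ _).trans (hQ 0 (Nat.zero_le L) 0)
  refine ⟨continuous_schNorm_boostPullback_sub L N f, 2 * Q + 1, N + L + 1, by positivity,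
    by positivity, fun t => ?_⟩
  calc _ ≤ 2 * exp |t| ^ (N + L) * Q := schNorm_boostPullback_sub_le f hQ t
    _ = 2 * Q * exp ((N + L) * |t|) := by rw [← exp_nat_mul]; push_cast; ring
    _ ≤ (2 * Q + 1) * exp ((N + L + 1) * |t|) :=
      mul_le_mul (by linarith) (exp_le_exp.2 (by nlinarith [abs_nonneg t])) (exp_pos _).le
        (by positivity)
end

section
/- Let H be a Hilbert space, η a metric operator with ηΩ = Ω, ⟨·,·⟩ = (·, η·), and suppose a collection of vectors {Φ_g} (the spectrally cut-off states) satisfies (Ω, Φ_g) = 0 and spans a dense subspace of the orthogonal complement of Ω in H. If Ω̃ ∈ H satisfies ⟨Ω̃, Φ_g⟩ = ⟨Ω̃, Ω⟩⟨Ω, Φ_g⟩-type translation-invariance relations forcing (Ω̃, ηΦ_g) = 0 for all g, and η is self-adjoint with ηΩ = Ω, then Ω̃ = cΩ for some c ∈ ℂ. -/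
/-! Since `η` is self-adjoint, `η Ω̃` is orthogonal to every `Φ g`, hence to the closed span of
the `Φ g`, which contains `Ωᗮ`; so `η Ω̃ ∈ Ωᗮᗮ = ℂ ∙ Ω`. Applying the involution `η`, which
fixes `Ω`, gives `Ω̃ ∈ ℂ ∙ Ω`. -/

open Submodule

theorem Submodule.mem_span_singleton_of_orthogonal_le_closure_span
    {𝕜 E : Type*} [RCLike 𝕜] [NormedAddCommGroup E] [InnerProductSpace 𝕜 E]
    {Ω w : E} {S : Set E} (hS : (𝕜 ∙ Ω)ᗮ ≤ (span 𝕜 S).topologicalClosure)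
    (hw : ∀ s ∈ S, (inner 𝕜 w s : 𝕜) = 0) : w ∈ 𝕜 ∙ Ω := by
  have hwS : w ∈ (span 𝕜 S)ᗮ :=
    isOrtho_iff_le.mp
      (isOrtho_span.mpr fun _ hu _ hv ↦ by rw [Set.mem_singleton_iff.mp hu]; exact hw _ hv)
      (mem_span_singleton_self w)
  rw [← orthogonal_closure] at hwS
  simpa only [orthogonal_orthogonal] using orthogonal_le hS hwS

theorem vacuum_unique_general
    {H : Type*} [NormedAddCommGroup H] [InnerProductSpace ℂ H] [CompleteSpace H]
    (η : H →L[ℂ] H) (hη : IsSelfAdjoint η) (hη2 : ∀ v, η (η v) = v)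
    (Ω : H) (hηΩ : η Ω = Ω)
    {ι : Type*} (Φ : ι → H)
    (hdense : (ℂ ∙ Ω)ᗮ ≤ (Submodule.span ℂ (Set.range Φ)).topologicalClosure)
    (Ω' : H) (hΩ' : ∀ g : ι, (inner ℂ Ω' (η (Φ g)) : ℂ) = 0) :
    ∃ c : ℂ, Ω' = c • Ω := by
  have hηΩ'_perp : ∀ s ∈ Set.range Φ, (inner ℂ (η Ω') s : ℂ) = 0 := by
    rintro _ ⟨g, rfl⟩
    rw [hη.isSymmetric.apply_clm, hΩ' g]
  obtain ⟨c, hc⟩ := mem_span_singleton.mp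
    (mem_span_singleton_of_orthogonal_le_closure_span hdense hηΩ'_perp)
  refine ⟨c, ?_⟩
  rw [← hη2 Ω', ← hc, map_smul, hηΩ]

/-- Uniqueness of the vacuum: if the vectors `Φ g` are orthogonal to `Ω`, span a dense
subspace of the orthogonal complement of `Ω`, and a vector `Ω̃` is orthogonal to all
`η Φ g`, where `η` is a metric operator fixing `Ω`, then `Ω̃` is proportional to `Ω`. -/
theorem vacuum_unique
    {H : Type*} [NormedAddCommGroup H] [InnerProductSpace ℂ H] [CompleteSpace H]
    (η : H →L[ℂ] H) (hη : IsSelfAdjoint η) (hη2 : ∀ v, η (η v) = v)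
    (Ω : H) (hΩnorm : ‖Ω‖ = 1) (hηΩ : η Ω = Ω)
    {ι : Type*} (Φ : ι → H)
    (horth : ∀ g : ι, (inner ℂ Ω (Φ g) : ℂ) = 0)
    (hdense : (ℂ ∙ Ω)ᗮ ≤ (Submodule.span ℂ (Set.range Φ)).topologicalClosure)
    (Ω' : H) (hΩ' : ∀ g : ι, (inner ℂ Ω' (η (Φ g)) : ℂ) = 0) :
    ∃ c : ℂ, Ω' = c • Ω :=
  vacuum_unique_general η hη hη2 Ω hηΩ Φ hdense Ω' hΩ'
end

section
/- Let η₂ be a bounded self-adjoint operator on a Hilbert space (H₂, (·,·)₂) with ker η₂ = 0, and define (·,·) = (·, |η₂|·)₂ and η = sign(η₂) (via the polar decomposition η₂ = η|η₂|). Then η is self-adjoint with η² = 1 on the completion H of H₂ with respect to (·,·), and ⟨u,v⟩ := (u, η₂ v)₂ = (u, η v) for all u, v ∈ H₂; moreover |⟨u,v⟩| ≤ ‖u‖·‖v‖ in the new norm. -/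
/-!
Since `a² = η₂²` with both self-adjoint, `‖η₂ v‖ = ‖a v‖`, so `a v ↦ η₂ v` is an isometry on the
range of `a`, which is dense because `a` is self-adjoint and injective. Its continuous extension is
`η = sign(η₂)`. Being the positive square root of `η₂²`, `a` commutes with `η₂`, and then
`a η = η₂`, `η η₂ = a` and `η² = 1` only need to be checked on the dense range of `a`. The final
bound is Cauchy–Schwarz for the positive form `(u, a v)₂ = (b u, b v)₂`, where `a = b* b`.
-/

open ContinuousLinearMap

theorem Commute.of_mul_self {A : Type*} [CStarAlgebra A] [PartialOrder A] [StarOrderedRing A]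
    {a b : A} (ha : 0 ≤ a) (h : Commute (a * a) b) : Commute a b := by
  rw [← CFC.sqrt_mul_self a ha, CFC.sqrt_eq_cfc]
  exact h.cfc_nnreal _

section InnerProductSpace

variable {𝕜 E F : Type*} [RCLike 𝕜]
  [NormedAddCommGroup E] [InnerProductSpace 𝕜 E] [CompleteSpace E]
  [NormedAddCommGroup F] [InnerProductSpace 𝕜 F] [CompleteSpace F]

theorem ContinuousLinearMap.norm_apply_eq_of_adjoint_comp_self_eq {S T : E →L[𝕜] F}
    (h : adjoint S ∘L S = adjoint T ∘L T) (v : E) : ‖S v‖ = ‖T v‖ := by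
  rw [apply_norm_eq_sqrt_inner_adjoint_left, apply_norm_eq_sqrt_inner_adjoint_left, h]

theorem IsSelfAdjoint.denseRange_of_injective {T : E →L[𝕜] E} (hT : IsSelfAdjoint T)
    (hinj : Function.Injective T) : DenseRange T := by
  have hclosure : T.range.topologicalClosure = ⊤ := by
    rw [Submodule.topologicalClosure_eq_top_iff, orthogonal_range, hT.adjoint_eq,
      LinearMap.ker_eq_bot.mpr hinj]
  have hdense := Submodule.dense_iff_topologicalClosure_eq_top.mpr hclosure
  rwa [LinearMap.coe_range] at hdense

end InnerProductSpace

theorem ContinuousLinearMap.norm_inner_apply_le_of_nonneg {E : Type*} [NormedAddCommGroup E]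
    [InnerProductSpace ℂ E] [CompleteSpace E] {T : E →L[ℂ] E} (hT : 0 ≤ T) (u v : E) :
    ‖inner ℂ u (T v)‖ ≤ √(inner ℂ u (T u)).re * √(inner ℂ v (T v)).re := by
  obtain ⟨b, rfl⟩ := CStarAlgebra.nonneg_iff_eq_star_mul_self.mp hT
  have hinner (x y : E) : inner ℂ x ((star b * b) y) = inner ℂ (b x) (b y) :=
    adjoint_inner_right b x (b y)
  have hsqrt (x : E) : √(inner ℂ x ((star b * b) x)).re = ‖b x‖ := by
    rw [hinner, ← RCLike.re_to_complex, inner_self_eq_norm_sq, Real.sqrt_sq (norm_nonneg _)]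
  rw [hinner, hsqrt, hsqrt]
  exact norm_inner_le_norm _ _

namespace GramOperator

variable {𝕜 H : Type*} [RCLike 𝕜] [NormedAddCommGroup H] [InnerProductSpace 𝕜 H]
  [CompleteSpace H] {η₂ a : H →L[𝕜] H}

/-- `sign(η₂)` when `a = |η₂|`: the continuous extension of `a v ↦ η₂ v` from the range of `a`. -/
noncomputable def sign (η₂ a : H →L[𝕜] H) : H →L[𝕜] H :=
  (η₂ : H →ₗ[𝕜] H).extendOfNorm (a : H →ₗ[𝕜] H)

theorem sign_apply_apply (hdense : DenseRange a) (hnorm : ∀ v, ‖η₂ v‖ ≤ ‖a v‖) (v : H) :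
    sign η₂ a (a v) = η₂ v :=
  LinearMap.extendOfNorm_eq hdense ⟨1, by simpa using hnorm⟩ v

theorem apply_sign_apply (hdense : DenseRange a) (hnorm : ∀ v, ‖η₂ v‖ ≤ ‖a v‖)
    (hcomm : Commute a η₂) (v : H) : a (sign η₂ a v) = η₂ v := by
  refine congrFun (hdense.equalizer (a.continuous.comp (sign η₂ a).continuous) η₂.continuous
    (funext fun w => ?_)) v
  simp only [Function.comp_apply, sign_apply_apply hdense hnorm]
  exact congrArg (· w) hcomm.eq

theorem sign_apply_gram (hdense : DenseRange a) (hnorm : ∀ v, ‖η₂ v‖ ≤ ‖a v‖)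
    (hcomm : Commute a η₂) (hsq : a * a = η₂ * η₂) (v : H) : sign η₂ a (η₂ v) = a v := by
  refine congrFun (hdense.equalizer ((sign η₂ a).continuous.comp η₂.continuous) a.continuous
    (funext fun w => ?_)) v
  have hcomm_w : η₂ (a w) = a (η₂ w) := congrArg (· w) hcomm.eq.symm
  simp only [Function.comp_apply, hcomm_w, sign_apply_apply hdense hnorm]
  exact congrArg (· w) hsq.symm

theorem sign_sign (hdense : DenseRange a) (hnorm : ∀ v, ‖η₂ v‖ ≤ ‖a v‖)
    (hcomm : Commute a η₂) (hsq : a * a = η₂ * η₂) (v : H) : sign η₂ a (sign η₂ a v) = v := by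
  refine congrFun (hdense.equalizer ((sign η₂ a).continuous.comp (sign η₂ a).continuous)
    continuous_id (funext fun w => ?_)) v
  simp only [Function.comp_apply, sign_apply_apply hdense hnorm,
    sign_apply_gram hdense hnorm hcomm hsq, id]

theorem inner_sign_apply_left (hη₂ : IsSelfAdjoint η₂) (ha : IsSelfAdjoint a)
    (hdense : DenseRange a) (hnorm : ∀ v, ‖η₂ v‖ ≤ ‖a v‖) (hcomm : Commute a η₂) (u v : H) :
    inner 𝕜 (sign η₂ a u) (a v) = inner 𝕜 u (a (sign η₂ a v)) :=
  calc inner 𝕜 (sign η₂ a u) (a v) = inner 𝕜 (a (sign η₂ a u)) v := (ha.isSymmetric _ _).symm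
    _ = inner 𝕜 u (η₂ v) := by rw [apply_sign_apply hdense hnorm hcomm]; exact hη₂.isSymmetric _ _
    _ = inner 𝕜 u (a (sign η₂ a v)) := by rw [apply_sign_apply hdense hnorm hcomm]

end GramOperator

open GramOperator

/-- Construction of a Krein space structure from an injective bounded self-adjoint
Gram operator `η₂`: with `a = |η₂|` (self-adjoint, positive, `a² = η₂²`), there is a
linear map `η = sign(η₂)` satisfying `η₂ = η ∘ a`, `η² = 1`, `η` is self-adjoint for
the new inner product `(u,v) = (u, a v)₂`, the form `⟨u,v⟩ = (u, η₂ v)₂` equals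
`(u, η v)`, and `|⟨u,v⟩| ≤ ‖u‖ ‖v‖` in the new norm. -/
theorem krein_from_gram_operator
    {H : Type*} [NormedAddCommGroup H] [InnerProductSpace ℂ H] [CompleteSpace H]
    (η₂ a : H →L[ℂ] H)
    (hη₂ : IsSelfAdjoint η₂) (hinj : Function.Injective η₂)
    (ha : IsSelfAdjoint a)
    (hapos : ∀ v : H, 0 ≤ ((inner ℂ v (a v) : ℂ)).re)
    (hsq : ∀ v : H, a (a v) = η₂ (η₂ v)) :
    ∃ η : H →ₗ[ℂ] H,
      (∀ v : H, η (a v) = η₂ v) ∧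
      (∀ v : H, η (η v) = v) ∧
      (∀ u v : H, (inner ℂ (η u) (a v) : ℂ) = inner ℂ u (a (η v))) ∧
      (∀ u v : H, (inner ℂ u (η₂ v) : ℂ) = inner ℂ u (a (η v))) ∧
      (∀ u v : H, ‖(inner ℂ u (η₂ v) : ℂ)‖ ≤
        Real.sqrt ((inner ℂ u (a u) : ℂ)).re * Real.sqrt ((inner ℂ v (a v) : ℂ)).re) := by
  have ha0 : 0 ≤ a := (nonneg_iff_isPositive a).mpr
    ⟨ha.isSymmetric, fun v => by rw [reApplyInnerSelf, ← coe_coe, ha.isSymmetric]; exact hapos v⟩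
  have hsq' : a * a = η₂ * η₂ := ext hsq
  have hcomm : Commute a η₂ := .of_mul_self ha0 (hsq' ▸ (Commute.refl η₂).mul_left (.refl η₂))
  have hdense : DenseRange a :=
    ha.denseRange_of_injective fun x y hxy => hinj (hinj (by rw [← hsq, ← hsq, hxy]))
  have hnorm (v : H) : ‖η₂ v‖ ≤ ‖a v‖ :=
    (norm_apply_eq_of_adjoint_comp_self_eq
      (by rw [hη₂.adjoint_eq, ha.adjoint_eq]; exact hsq'.symm) v).le
  have hgram (u v : H) : inner ℂ u (η₂ v) = inner ℂ u (a (sign η₂ a v)) := by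
    rw [apply_sign_apply hdense hnorm hcomm]
  refine ⟨sign η₂ a, sign_apply_apply hdense hnorm, sign_sign hdense hnorm hcomm hsq',
    inner_sign_apply_left hη₂ ha hdense hnorm hcomm, hgram, fun u v => ?_⟩
  calc ‖inner ℂ u (η₂ v)‖
      ≤ √(inner ℂ u (a u)).re * √(inner ℂ (sign η₂ a v) (a (sign η₂ a v))).re := by
        rw [hgram]; exact norm_inner_apply_le_of_nonneg ha0 _ _
    _ = √(inner ℂ u (a u)).re * √(inner ℂ v (a v)).re := by
        rw [inner_sign_apply_left hη₂ ha hdense hnorm hcomm, sign_sign hdense hnorm hcomm hsq']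
end
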